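/- arXiv:1912.02509 — 2 statements merged into one kernel-verified Lean document; each statement's English description precedes it below -/
import Mathlib

section
/- Let R be a right Noetherian ring and S a multiplicatively closed subset of regular elements of R. Define k = {right ideals I of R | I ∩ S ≠ ∅}. Then S is a right Ore set if and only if k is a Gabriel filter (i.e., k is closed under enlargement, finite intersection, and the operation I ↦ x⁻¹(I) for all x ∈ R). -/
open MulOpposite
universe u

/-- Gabriel–Rentschler deviation: `DevLE α P` means the deviation of the
poset `P` is at most `α`. -/
def DevLE : Ordinal.{u} → (P : Type u) → [inst : PartialOrder P] → Prop :=
  fun α P _ =>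
    ∀ f : ℕ → P, (∀ n, f (n + 1) ≤ f n) →
      ∃ N : ℕ, ∀ n, N ≤ n →
        f (n + 1) = f n ∨ ∃ β, ∃ _ : β < α, DevLE β (Set.Icc (f (n + 1)) (f n))
termination_by α => α

/-- Right ideals of `R`, as submodules of `R` viewed as a right module. -/
abbrev RightIdeal (R : Type u) [Ring R] : Type u := Submodule Rᵐᵒᵖ R

/-- Gabriel–Rentschler Krull dimension of a right `R`-module `M`
(least `α` bounding the deviation of the submodule lattice; junk value `0`
if no such ordinal exists). -/
noncomputable def rKdim (R : Type u) [Ring R] (M : Type u) [AddCommGroup M]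
    [Module Rᵐᵒᵖ M] : Ordinal.{u} :=
  sInf {α : Ordinal.{u} | DevLE α (Submodule Rᵐᵒᵖ M)}

/-- `x⁻¹(I) = {a | x * a ∈ I}`, a right ideal. -/
def preIdeal {R : Type u} [Ring R] (x : R) (I : RightIdeal R) : RightIdeal R where
  carrier := {a : R | x * a ∈ I}
  add_mem' := by intro a b ha hb; simpa [mul_add] using add_mem ha hb
  zero_mem' := by simp
  smul_mem' := by
    intro r a ha
    show x * (op (unop r) • a) ∈ I
    rw [op_smul_eq_mul, ← mul_assoc]
    exact I.smul_mem r ha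

/-- `S` is a right Ore set. -/
def RightOre {R : Type u} [Ring R] (S : Set R) : Prop :=
  ∀ r : R, ∀ s ∈ S, ∃ r' : R, ∃ s' ∈ S, r * s' = s * r'

/-- A multiplicatively closed set. -/
def MulClosed {R : Type u} [Ring R] (S : Set R) : Prop :=
  ∀ a ∈ S, ∀ b ∈ S, a * b ∈ S

/-- A Gabriel filter of right ideals. -/
def IsGabrielFilter {R : Type u} [Ring R] (F : Set (RightIdeal R)) : Prop :=
  (∀ I ∈ F, ∀ J : RightIdeal R, I ≤ J → J ∈ F) ∧
  (∀ I ∈ F, ∀ J ∈ F, I ⊓ J ∈ F) ∧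
  (∀ I ∈ F, ∀ x : R, preIdeal x I ∈ F)

/-- A right ideal that is two-sided. -/
def TwoSided {R : Type u} [Ring R] (I : RightIdeal R) : Prop :=
  ∀ r : R, ∀ x ∈ I, r * x ∈ I

/-- A (two-sided) prime ideal of a possibly noncommutative ring. -/
def IsPrimeIdeal {R : Type u} [Ring R] (p : RightIdeal R) : Prop :=
  TwoSided p ∧ p ≠ ⊤ ∧ ∀ a b : R, (∀ r : R, a * r * b ∈ p) → a ∈ p ∨ b ∈ p

/-- `C(p)`: the elements of `R` regular modulo `p`. -/
def CMod {R : Type u} [Ring R] (p : RightIdeal R) : Set R :=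
  {c : R | (∀ a : R, c * a ∈ p → a ∈ p) ∧ (∀ a : R, a * c ∈ p → a ∈ p)}

/-- A prime ring. -/
def IsPrimeRing (R : Type u) [Ring R] : Prop :=
  ∀ a b : R, (∀ r : R, a * r * b = 0) → a = 0 ∨ b = 0

/-- A right module is `V`-torsion. -/
def IsTorsionBy' {R : Type u} [Ring R] (V : Set R) (M : Type u) [AddCommGroup M]
    [Module Rᵐᵒᵖ M] : Prop :=
  ∀ x : M, ∃ v ∈ V, op v • x = 0

/-- The annihilator (as a set) of a right module. -/
def annSet (R : Type u) [Ring R] (M : Type u) [AddCommGroup M] [Module Rᵐᵒᵖ M] :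
    Set R :=
  {a : R | ∀ x : M, op a • x = 0}

/-- `R` is right fully bounded: in every prime factor, every essential right
ideal contains a nonzero two-sided ideal. -/
def RightFullyBounded (R : Type u) [Ring R] : Prop :=
  ∀ p : RightIdeal R, IsPrimeIdeal p →
    ∀ I : RightIdeal R, p ≤ I →
      (∀ J : RightIdeal R, p < J → p < I ⊓ J) →
      ∃ A : RightIdeal R, TwoSided A ∧ p < A ∧ A ≤ I

/-- A uniform right module: any two nonzero submodules intersect nontrivially. -/
def IsUniformMod (R : Type u) [Ring R] (M : Type u) [AddCommGroup M]
    [Module Rᵐᵒᵖ M] : Prop :=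
  ∀ N N' : Submodule Rᵐᵒᵖ M, N ≠ ⊥ → N' ≠ ⊥ → N ⊓ N' ≠ ⊥

/-- The annihilator (as a set of elements of `R`) of a submodule. -/
def annSubSet (R : Type u) [Ring R] {M : Type u} [AddCommGroup M]
    [Module Rᵐᵒᵖ M] (N : Submodule Rᵐᵒᵖ M) : Set R :=
  {a : R | ∀ x ∈ N, op a • x = 0}

/-- `q` is an associated (assassinator) prime of the right module `M`:
`q` is prime and is the annihilator of a nonzero submodule all of whose
nonzero submodules also have annihilator `q`. -/
def IsAssocPrime (R : Type u) [Ring R] (q : RightIdeal R) (M : Type u)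
    [AddCommGroup M] [Module Rᵐᵒᵖ M] : Prop :=
  IsPrimeIdeal q ∧ ∃ N : Submodule Rᵐᵒᵖ M, N ≠ ⊥ ∧
    ∀ N' : Submodule Rᵐᵒᵖ M, N' ≤ N → N' ≠ ⊥ → annSubSet R N' = (q : Set R)

/-- A critical right module: nonzero, and every proper quotient has strictly
smaller Krull dimension. -/
def IsCriticalMod (R : Type u) [Ring R] (M : Type u) [AddCommGroup M]
    [Module Rᵐᵒᵖ M] : Prop :=
  Nontrivial M ∧
    ∀ N : Submodule Rᵐᵒᵖ M, N ≠ ⊥ → rKdim R (M ⧸ N) < rKdim R M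

/-- `M` is a fully faithful right `R/q`-module: `q` annihilates `M` and every
nonzero submodule of `M` has annihilator exactly `q`. -/
def FullyFaithfulOver (R : Type u) [Ring R] (q : RightIdeal R) (M : Type u)
    [AddCommGroup M] [Module Rᵐᵒᵖ M] : Prop :=
  (q : Set R) ⊆ annSet R M ∧
    ∀ N : Submodule Rᵐᵒᵖ M, N ≠ ⊥ → annSubSet R N = (q : Set R)

/-- For a right Noetherian ring and a multiplicative set `S` of regular
elements, `S` is a right Ore set iff `k = {I | I ∩ S ≠ ∅}` is a Gabriel
filter. -/
theorem stmt_1 {R : Type u} [Ring R] [IsNoetherian Rᵐᵒᵖ R] (S : Set R)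
    (hone : (1 : R) ∈ S) (hmul : MulClosed S) (hreg : ∀ s ∈ S, IsRegular s) :
    RightOre S ↔
      IsGabrielFilter {I : RightIdeal R | ((I : Set R) ∩ S).Nonempty} := by
  constructor
  · intro hOre
    refine ⟨?_, ?_, ?_⟩
    · rintro I ⟨s, hsI, hsS⟩ J hIJ
      exact ⟨s, hIJ hsI, hsS⟩
    · rintro I ⟨s, hsI, hsS⟩ J ⟨t, htJ, htS⟩
      obtain ⟨r', s', hs'S, heq⟩ := hOre t s hsS
      refine ⟨t * s', ⟨?_, ?_⟩, hmul t htS s' hs'S⟩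
      · show t * s' ∈ I
        rw [heq]
        simpa [op_smul_eq_mul] using I.smul_mem (op r') hsI
      · simpa [op_smul_eq_mul] using J.smul_mem (op s') htJ
    · rintro I ⟨s, hsI, hsS⟩ x
      obtain ⟨r', s', hs'S, heq⟩ := hOre x s hsS
      refine ⟨s', ?_, hs'S⟩
      show x * s' ∈ I
      rw [heq]
      simpa [op_smul_eq_mul] using I.smul_mem (op r') hsI
  · intro hG r s hs
    have h1 : Submodule.span Rᵐᵒᵖ {s} ∈
        {I : RightIdeal R | ((I : Set R) ∩ S).Nonempty} :=
      ⟨s, Submodule.mem_span_singleton_self s, hs⟩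
    obtain ⟨s', hs'pre, hs'S⟩ := hG.2.2 _ h1 r
    have hmem : r * s' ∈ Submodule.span Rᵐᵒᵖ {s} := hs'pre
    obtain ⟨a, ha⟩ := Submodule.mem_span_singleton.mp hmem
    refine ⟨unop a, s', hs'S, ?_⟩
    rw [← ha]
    simp [op_smul_eq_mul]
end

section
/- Let R be a right Noetherian, right fully bounded ring and q a prime ideal of R. If W is a q-critical cyclic right R-module with annihilator q (so W is a fully faithful R/q-module), then W is C(q)-torsion-free: w·c ≠ 0 for every nonzero w ∈ W and every c ∈ C(q). -/
open MulOpposite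
universe u

/-!
Suppose `w·c = 0` with `w ≠ 0` and `c ∈ C(q)`. Left multiplication by `c` is an injective,
non-surjective endomorphism of `R ⧸ q`, so `R ⧸ (q + cR)` has Krull dimension below
`α = Kdim (R ⧸ q) = Kdim W`; its quotient `wR` does too. Criticality of `W` gives
`Kdim (W ⧸ wR) < α` as well, and then `Kdim W < α`, a contradiction.
-/

section Deviation

variable {P Q : Type u} [PartialOrder P] [PartialOrder Q]

theorem DevLE.mono {α α' : Ordinal.{u}} (hα : α ≤ α') (h : DevLE α P) : DevLE α' P := by
  rw [DevLE] at h ⊢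
  intro f hf
  obtain ⟨N, hN⟩ := h f hf
  exact ⟨N, fun n hn => (hN n hn).imp_right fun ⟨β, hβ, hd⟩ => ⟨β, hβ.trans_le hα, hd⟩⟩

theorem devLE_Icc_of_eq {x y : P} (h : x = y) (α : Ordinal.{u}) : DevLE α (Set.Icc x y) := by
  subst h
  rw [DevLE]
  intro f _
  refine ⟨0, fun n _ => Or.inl (Subtype.ext ?_)⟩
  exact ((f (n + 1)).2.2.antisymm (f (n + 1)).2.1).trans ((f n).2.2.antisymm (f n).2.1).symm

theorem DevLE.of_monotone (α : Ordinal.{u}) :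
    ∀ {P Q : Type u} [PartialOrder P] [PartialOrder Q] (f : P → Q), Monotone f →
      (∀ x y, x ≤ y → f x = f y → x = y) → DevLE α Q → DevLE α P := by
  induction α using WellFoundedLT.induction with
  | _ α ih =>
    intro P Q _ _ f hf hinj hQ
    rw [DevLE] at hQ ⊢
    intro g hg
    obtain ⟨N, hN⟩ := hQ (f ∘ g) fun n => hf (hg n)
    refine ⟨N, fun n hn => (hN n hn).imp (hinj _ _ (hg n)) fun ⟨β, hβ, hd⟩ => ⟨β, hβ, ?_⟩⟩
    refine ih β hβ (fun x => ⟨f x, hf x.2.1, hf x.2.2⟩) (fun x y hxy => hf hxy) ?_ hd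
    exact fun x y hxy hfxy => Subtype.ext (hinj _ _ hxy (congrArg Subtype.val hfxy))

theorem DevLE.Icc_of_prod {α : Ordinal.{u}} {a b : P × Q}
    (h : DevLE α (Set.Icc a.1 b.1 × Set.Icc a.2 b.2)) : DevLE α (Set.Icc a b) := by
  refine DevLE.of_monotone α (fun x => (⟨x.1.1, x.2.1.1, x.2.2.1⟩, ⟨x.1.2, x.2.1.2, x.2.2.2⟩))
    (fun x y hxy => Prod.mk_le_mk.2 ⟨hxy.1, hxy.2⟩) (fun x y _ hxy => Subtype.ext ?_) h
  exact Prod.ext (congrArg (fun z => z.1.1) hxy) (congrArg (fun z => z.2.1) hxy)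

theorem DevLE.prod (α : Ordinal.{u}) :
    ∀ {P Q : Type u} [PartialOrder P] [PartialOrder Q],
      DevLE α P → DevLE α Q → DevLE α (P × Q) := by
  induction α using WellFoundedLT.induction with
  | _ α ih =>
    intro P Q _ _ hP hQ
    rw [DevLE] at hP hQ ⊢
    intro g hg
    obtain ⟨N₁, hN₁⟩ := hP (fun n => (g n).1) fun n => (hg n).1
    obtain ⟨N₂, hN₂⟩ := hQ (fun n => (g n).2) fun n => (hg n).2
    refine ⟨max N₁ N₂, fun n hn => ?_⟩
    have step : ∀ β < α, DevLE β (Set.Icc (g (n + 1)).1 (g n).1) →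
        DevLE β (Set.Icc (g (n + 1)).2 (g n).2) → DevLE β (Set.Icc (g (n + 1)) (g n)) :=
      fun β hβ h₁ h₂ => DevLE.Icc_of_prod (ih β hβ h₁ h₂)
    rcases hN₁ n (le_of_max_le_left hn) with e₁ | ⟨β₁, hβ₁, hd₁⟩ <;>
      rcases hN₂ n (le_of_max_le_right hn) with e₂ | ⟨β₂, hβ₂, hd₂⟩
    · exact Or.inl (Prod.ext e₁ e₂)
    · exact Or.inr ⟨β₂, hβ₂, step β₂ hβ₂ (devLE_Icc_of_eq e₁ β₂) hd₂⟩
    · exact Or.inr ⟨β₁, hβ₁, step β₁ hβ₁ hd₁ (devLE_Icc_of_eq e₂ β₁)⟩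
    · exact Or.inr ⟨max β₁ β₂, max_lt hβ₁ hβ₂, step _ (max_lt hβ₁ hβ₂)
        (hd₁.mono (le_max_left _ _)) (hd₂.mono (le_max_right _ _))⟩

end Deviation

section SubmoduleDeviation

variable {A : Type*} [Ring A] {M M' : Type u} [AddCommGroup M] [Module A M]
  [AddCommGroup M'] [Module A M'] {α : Ordinal.{u}}

theorem DevLE.submodule_of_surjective (π : M →ₗ[A] M') (hπ : Function.Surjective π)
    (h : DevLE α (Submodule A M)) : DevLE α (Submodule A M') :=
  DevLE.of_monotone α (Submodule.comap π) (fun _ _ => Submodule.comap_mono)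
    (fun _ _ _ e => Submodule.comap_injective_of_surjective hπ e) h

theorem DevLE.submodule_of_quotient (N : Submodule A M) (hN : DevLE α (Submodule A N))
    (hMN : DevLE α (Submodule A (M ⧸ N))) : DevLE α (Submodule A M) := by
  refine DevLE.of_monotone α (fun C => (C.comap N.subtype, C.map N.mkQ))
    (fun _ _ h => Prod.mk_le_mk.2 ⟨Submodule.comap_mono h, Submodule.map_mono h⟩) ?_
    (hN.prod α hMN)
  intro x y hxy he
  have hinf : N ⊓ x = N ⊓ y := by
    simpa only [Submodule.map_comap_subtype] using
      congrArg (Submodule.map N.subtype) (Prod.ext_iff.1 he).1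
  have hsup : N ⊔ x = N ⊔ y := by
    simpa only [Submodule.comap_map_mkQ] using
      congrArg (Submodule.comap N.mkQ) (Prod.ext_iff.1 he).2
  refine eq_of_le_of_inf_le_of_sup_le hxy (z := N) ?_ ?_
  · rw [inf_comm, ← hinf, inf_comm]
  · rw [sup_comm, ← hsup, sup_comm]

theorem DevLE.submodule_range_of_le_ker (K : Submodule A M) (g : M →ₗ[A] M')
    (hK : K ≤ LinearMap.ker g) (h : DevLE α (Submodule A (M ⧸ K))) :
    DevLE α (Submodule A (LinearMap.range g)) := by
  have hK' : K ≤ LinearMap.ker g.rangeRestrict := by rwa [LinearMap.ker_rangeRestrict]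
  have hsurj : Function.Surjective (K.liftQ g.rangeRestrict hK') := by
    rw [← LinearMap.range_eq_top, Submodule.range_liftQ, LinearMap.range_rangeRestrict]
  exact h.submodule_of_surjective _ hsurj

/-- The chain `M ⊇ f M ⊇ f² M ⊇ ⋯` has all factors isomorphic to `M ⧸ f M`, so it cannot
stabilise and one of its intervals, of deviation `< α`, contains a copy of `Sub (M ⧸ f M)`. -/
theorem exists_devLE_quotient_range_lt {f : Module.End A M} (hf : Function.Injective f)
    (hrange : LinearMap.range f ≠ ⊤) (h : DevLE α (Submodule A M)) :
    ∃ β < α, DevLE β (Submodule A (M ⧸ LinearMap.range f)) := by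
  have hrange_pow : ∀ n, LinearMap.range (f ^ (n + 1)) = (LinearMap.range f).map (f ^ n) := by
    intro n
    rw [pow_succ, Module.End.mul_eq_comp, LinearMap.range_comp]
  rw [DevLE] at h
  obtain ⟨N, hN⟩ := h (fun n => LinearMap.range (f ^ n)) fun n => by
    rw [hrange_pow]
    exact LinearMap.map_le_range
  have hinj := Module.End.iterate_injective hf N
  rcases hN N le_rfl with heq | ⟨β, hβ, hd⟩
  · refine absurd (Submodule.map_injective_of_injective hinj ?_) hrange
    rw [← hrange_pow, Submodule.map_top]
    exact heq
  have hlower : ∀ D : Submodule A (M ⧸ LinearMap.range f),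
      LinearMap.range (f ^ (N + 1)) ≤ (D.comap (LinearMap.range f).mkQ).map (f ^ N) := by
    intro D
    rw [hrange_pow]
    refine Submodule.map_mono fun x hx => ?_
    simp [(Submodule.Quotient.mk_eq_zero _).2 hx]
  refine ⟨β, hβ, DevLE.of_monotone β (fun D => ⟨_, hlower D, LinearMap.map_le_range⟩)
    (fun D D' hD => Submodule.map_mono (Submodule.comap_mono hD)) (fun D D' _ he => ?_) hd⟩
  exact Submodule.comap_injective_of_surjective (LinearMap.range f).mkQ_surjective
    (Submodule.map_injective_of_injective hinj (congrArg Subtype.val he))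

end SubmoduleDeviation

section KrullDimension

variable {R : Type u} [Ring R] {M : Type u} [AddCommGroup M] [Module Rᵐᵒᵖ M]

theorem rKdim_le_of_devLE {α : Ordinal.{u}} (h : DevLE α (Submodule Rᵐᵒᵖ M)) :
    rKdim R M ≤ α :=
  csInf_le' h

theorem devLE_rKdim {α : Ordinal.{u}} (h : DevLE α (Submodule Rᵐᵒᵖ M)) :
    DevLE (rKdim R M) (Submodule Rᵐᵒᵖ M) :=
  csInf_mem (s := {β | DevLE β (Submodule Rᵐᵒᵖ M)}) ⟨α, h⟩

theorem devLE_rKdim_of_ne_zero (h : rKdim R M ≠ 0) : DevLE (rKdim R M) (Submodule Rᵐᵒᵖ M) := by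
  refine csInf_mem (s := {β | DevLE β (Submodule Rᵐᵒᵖ M)})
    (Set.nonempty_iff_ne_empty.2 fun hempty => h ?_)
  rw [rKdim, hempty, Ordinal.sInf_empty]

theorem IsCriticalMod.rKdim_ne_zero (hM : IsCriticalMod R M) : rKdim R M ≠ 0 :=
  have := hM.1
  fun h0 => not_lt_zero (h0 ▸ hM.2 ⊤ top_ne_bot)

theorem IsCriticalMod.not_devLE_submodule (hM : IsCriticalMod R M) {N : Submodule Rᵐᵒᵖ M}
    (hN : N ≠ ⊥) {β : Ordinal.{u}} (hβ : β < rKdim R M) : ¬ DevLE β (Submodule Rᵐᵒᵖ N) := by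
  intro hNβ
  have hMdev := devLE_rKdim_of_ne_zero hM.rKdim_ne_zero
  have hMN := devLE_rKdim (hMdev.submodule_of_surjective N.mkQ N.mkQ_surjective)
  have hle := rKdim_le_of_devLE ((hNβ.mono (le_max_left β _)).submodule_of_quotient N
    (hMN.mono (le_max_right _ (rKdim R (M ⧸ N)))))
  exact hle.not_gt (max_lt hβ (hM.2 N hN))

end KrullDimension

section QuotientMaps

variable {R : Type u} [Ring R] (q : RightIdeal R)

def quotMulLeft (hq : TwoSided q) (c : R) : Module.End Rᵐᵒᵖ (R ⧸ q) :=
  q.mapQ q (LinearMap.mulLeft Rᵐᵒᵖ c) fun _ ha => hq c _ ha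

theorem quotMulLeft_mk (hq : TwoSided q) (c a : R) :
    quotMulLeft q hq c (Submodule.Quotient.mk a) = Submodule.Quotient.mk (c * a) :=
  rfl

theorem quotMulLeft_injective (hq : TwoSided q) {c : R} (hc : ∀ a, c * a ∈ q → a ∈ q) :
    Function.Injective (quotMulLeft q hq c) := by
  refine (injective_iff_map_eq_zero _).2 fun x hx => ?_
  induction x using Submodule.Quotient.induction_on with
  | H a =>
    rw [quotMulLeft_mk, Submodule.Quotient.mk_eq_zero] at hx
    exact (Submodule.Quotient.mk_eq_zero q).2 (hc a hx)

variable {W : Type u} [AddCommGroup W] [Module Rᵐᵒᵖ W]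

def quotSMul (w : W) (hw : ∀ a ∈ q, op a • w = 0) : (R ⧸ q) →ₗ[Rᵐᵒᵖ] W :=
  q.liftQ (LinearMap.toSpanSingleton Rᵐᵒᵖ W w ∘ₗ (opLinearEquiv Rᵐᵒᵖ).toLinearMap) hw

theorem quotSMul_mk (w : W) (hw : ∀ a ∈ q, op a • w = 0) (a : R) :
    quotSMul q w hw (Submodule.Quotient.mk a) = op a • w :=
  rfl

end QuotientMaps

theorem stmt_14_general {R : Type u} [Ring R]
    (q : RightIdeal R) (hq : IsPrimeIdeal q)
    (W : Type u) [AddCommGroup W] [Module Rᵐᵒᵖ W] [Nontrivial W]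
    (hann : annSet R W = (q : Set R))
    (hkd : rKdim R W = rKdim R (R ⧸ q))
    (hcrit : ∀ N : Submodule Rᵐᵒᵖ W, N ≠ ⊥ → rKdim R (W ⧸ N) < rKdim R W) :
    ∀ w : W, w ≠ 0 → ∀ c ∈ CMod q, op c • w ≠ 0 := by
  intro w hw c hc hwc
  have hW : IsCriticalMod R W := ⟨inferInstance, hcrit⟩
  set f := quotMulLeft q hq.1 c
  set g := quotSMul q w fun a ha => hann.ge ha w
  have hfg : LinearMap.range f ≤ LinearMap.ker g := by
    rintro _ ⟨x, rfl⟩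
    induction x using Submodule.Quotient.induction_on with
    | H a => simp [f, g, quotMulLeft_mk, quotSMul_mk, op_mul, mul_smul, hwc]
  have hg : LinearMap.range g ≠ ⊥ := by
    refine (Submodule.ne_bot_iff _).2 ⟨w, ⟨Submodule.Quotient.mk 1, ?_⟩, hw⟩
    simp [g, quotSMul_mk]
  have hf : LinearMap.range f ≠ ⊤ := by
    intro htop
    rw [htop, top_le_iff, LinearMap.ker_eq_top] at hfg
    exact hg (by rw [hfg, LinearMap.range_zero])
  obtain ⟨β, hβ, hdev⟩ := exists_devLE_quotient_range_lt (quotMulLeft_injective q hq.1 hc.1) hf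
    (devLE_rKdim_of_ne_zero (hkd ▸ hW.rKdim_ne_zero))
  exact hW.not_devLE_submodule hg (hkd ▸ hβ) (hdev.submodule_range_of_le_ker _ g hfg)

/-- Over a right Noetherian right fully bounded ring, a `q`-critical cyclic
right module with annihilator `q` is `C(q)`-torsion-free. -/
theorem stmt_14 {R : Type u} [Ring R] [IsNoetherian Rᵐᵒᵖ R]
    (hfb : RightFullyBounded R) (q : RightIdeal R) (hq : IsPrimeIdeal q)
    (W : Type u) [AddCommGroup W] [Module Rᵐᵒᵖ W] [Nontrivial W]
    (hcyc : ∃ w : W, (⊤ : Submodule Rᵐᵒᵖ W) = Submodule.span Rᵐᵒᵖ {w})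
    (hann : annSet R W = (q : Set R))
    (hkd : rKdim R W = rKdim R (R ⧸ q))
    (hcrit : ∀ N : Submodule Rᵐᵒᵖ W, N ≠ ⊥ → rKdim R (W ⧸ N) < rKdim R W) :
    ∀ w : W, w ≠ 0 → ∀ c ∈ CMod q, op c • w ≠ 0 :=
  stmt_14_general q hq W hann hkd hcrit
end
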